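/- The 16-column beamforming matrix B_M = [D, D², D³, D⁴] built from the 4×4 matrix D above has maximum cross-correlation δ(B_M) = 1/2 over all pairs of distinct columns, which exceeds the Welch bound √((16−4)/(4·15)) = 1/√5 ≈ 0.4472. -/

import Mathlib

open Complex Matrix

/-!
Since `D` is unitary, the Gram matrix of `B_M` consists of the blocks
`(Dᵃ)ᴴ Dᵇ = Dᵇ⁻ᵃ` (`a ≤ b`, and their conjugate transposes). The diagonal blocks are the
identity, and every entry of `D`, `D²`, `D³` has modulus `1/2`, so every correlation between
distinct columns is `0` or `1/2`.
-/

theorem star_pow_mul_pow_of_le {R : Type*} [Monoid R] [StarMul R] {u : R} (hu : u ∈ unitary R)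
    {a b : ℕ} (hab : a ≤ b) : star (u ^ a) * u ^ b = u ^ (b - a) := by
  obtain ⟨c, rfl⟩ := Nat.exists_eq_add_of_le hab
  rw [pow_add, ← mul_assoc, Unitary.star_mul_self_of_mem (pow_mem hu a), one_mul,
    Nat.add_sub_cancel_left]

section
variable {𝕜 ι κ : Type*} [RCLike 𝕜]

theorem norm_conjTranspose_mul_apply_comm [Fintype κ] (A B : Matrix κ ι 𝕜) (r s : ι) :
    ‖(Aᴴ * B) r s‖ = ‖(Bᴴ * A) s r‖ := by
  rw [← conjTranspose_conjTranspose A, ← conjTranspose_mul, conjTranspose_apply, norm_star,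
    conjTranspose_conjTranspose]

variable [Fintype ι] [DecidableEq ι]

theorem norm_conjTranspose_pow_mul_pow_apply_of_le {U : Matrix ι ι 𝕜}
    (hU : U ∈ unitaryGroup ι 𝕜) {a b : ℕ} (hab : a ≤ b) (r s : ι) :
    ‖((U ^ a)ᴴ * U ^ b) r s‖ = ‖(U ^ (b - a)) r s‖ := by
  rw [← star_eq_conjTranspose, star_pow_mul_pow_of_le hU hab]

theorem norm_conjTranspose_pow_mul_pow_apply_le {U : Matrix ι ι 𝕜}
    (hU : U ∈ unitaryGroup ι 𝕜) {N : ℕ} {c : ℝ} (hc : 0 ≤ c)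
    (hflat : ∀ m, 0 < m → m < N → ∀ i j, ‖(U ^ m) i j‖ = c)
    {a b : ℕ} (hab : Nat.dist a b < N) {r s : ι} (hne : (a, r) ≠ (b, s)) :
    ‖((U ^ a)ᴴ * U ^ b) r s‖ ≤ c := by
  wlog hle : a ≤ b generalizing a b r s
  · rw [norm_conjTranspose_mul_apply_comm]
    exact this (Nat.dist_comm a b ▸ hab) (fun h => hne (by simp_all)) (by omega)
  rw [norm_conjTranspose_pow_mul_pow_apply_of_le hU hle]
  rcases hle.eq_or_lt with rfl | hlt
  · have hrs : r ≠ s := fun h => hne (by rw [h])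
    simp [hrs, hc]
  · rw [hflat _ (by omega) (by unfold Nat.dist at hab; omega)]
end

noncomputable def mubD : Matrix (Fin 4) (Fin 4) ℂ := (1 / 2 : ℂ) •
  !![-I, -I, -I, -I;
     1, -1, 1, -1;
     -I, -I, I, I;
     -1, 1, 1, -1]

theorem mubD_mem_unitaryGroup : mubD ∈ unitaryGroup (Fin 4) ℂ := by
  rw [mem_unitaryGroup_iff']
  ext i j
  fin_cases i <;> fin_cases j <;>
    simp [mubD, mul_apply, Fin.sum_univ_four, star_eq_conjTranspose, Complex.ext_iff] <;> norm_num

theorem mubD_sq : mubD ^ 2 = (1 / 2 : ℂ) •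
    !![-1, -1, -I, I;
       -I, -I, -1, 1;
       -I, I, -1, -1;
       1, -1, I, I] := by
  ext i j
  fin_cases i <;> fin_cases j <;>
    simp [sq, mubD, mul_apply, Fin.sum_univ_four, Complex.ext_iff] <;> norm_num

theorem mubD_pow_three : mubD ^ 3 = (1 / 2 : ℂ) •
    !![-1, I, I, 1;
       -1, I, -I, -1;
       I, -1, -1, -I;
       -I, 1, -1, -I] := by
  ext i j
  rw [pow_succ, mubD_sq]
  fin_cases i <;> fin_cases j <;>
    simp [mubD, mul_apply, Fin.sum_univ_four, Complex.ext_iff] <;> norm_num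

theorem norm_mubD_pow_apply {m : ℕ} (hm : 0 < m) (hm' : m < 4) (i j : Fin 4) :
    ‖(mubD ^ m) i j‖ = 1 / 2 := by
  obtain rfl | rfl | rfl : m = 1 ∨ m = 2 ∨ m = 3 := by omega
  · rw [pow_one, mubD]
    fin_cases i <;> fin_cases j <;> simp
  · rw [mubD_sq]
    fin_cases i <;> fin_cases j <;> simp
  · rw [mubD_pow_three]
    fin_cases i <;> fin_cases j <;> simp

/-- The 16-column MUB beamforming matrix `B_M = [D, D², D³, D⁴]` has maximum
cross-correlation `1/2` over distinct columns, which exceeds the Welch bound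
`√((16−4)/(4·15)) = 1/√5`. -/
theorem mub_beamforming_coherence (D : Matrix (Fin 4) (Fin 4) ℂ)
    (hD : D = (1 / 2 : ℂ) •
      !![-Complex.I, -Complex.I, -Complex.I, -Complex.I;
         1, -1, 1, -1;
         -Complex.I, -Complex.I, Complex.I, Complex.I;
         -1, 1, 1, -1])
    (B : Matrix (Fin 4) (Fin 16) ℂ)
    (hB : ∀ (i : Fin 4) (n : Fin 16),
      B i n = (D ^ ((n : ℕ) / 4 + 1)) i ⟨(n : ℕ) % 4, Nat.mod_lt _ (by norm_num)⟩) :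
    (∀ l n : Fin 16, l ≠ n →
      ‖∑ i : Fin 4, (starRingEnd ℂ) (B i l) * B i n‖ ≤ 1 / 2) ∧
    (∃ l n : Fin 16, l ≠ n ∧
      ‖∑ i : Fin 4, (starRingEnd ℂ) (B i l) * B i n‖ = 1 / 2) ∧
    Real.sqrt ((16 - 4 : ℝ) / (4 * 15)) = 1 / Real.sqrt 5 ∧
    1 / Real.sqrt 5 < 1 / 2 := by
  obtain rfl : D = mubD := hD
  have gram (l n : Fin 16) : ∑ i : Fin 4, (starRingEnd ℂ) (B i l) * B i n =
      ((mubD ^ ((l : ℕ) / 4 + 1))ᴴ * mubD ^ ((n : ℕ) / 4 + 1))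
        ⟨l % 4, Nat.mod_lt _ (by norm_num)⟩ ⟨n % 4, Nat.mod_lt _ (by norm_num)⟩ := by
    simp only [hB, mul_apply, conjTranspose_apply, Complex.star_def]
  refine ⟨fun l n hln => ?_, ⟨0, 4, by decide, ?_⟩, ?_, ?_⟩
  · rw [gram]
    refine norm_conjTranspose_pow_mul_pow_apply_le mubD_mem_unitaryGroup (by norm_num)
      (fun _ => norm_mubD_pow_apply) ?_ ?_
    · unfold Nat.dist; omega
    · simp only [ne_eq, Prod.mk.injEq, Fin.mk.injEq, add_left_inj]
      omega
  · rw [gram, norm_conjTranspose_pow_mul_pow_apply_of_le mubD_mem_unitaryGroup (by norm_num)]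
    exact norm_mubD_pow_apply (by norm_num) (by norm_num) _ _
  · rw [show (16 - 4 : ℝ) / (4 * 15) = 5⁻¹ by norm_num, Real.sqrt_inv, one_div]
  · rw [one_div_lt_one_div (by positivity) (by norm_num), Real.lt_sqrt (by norm_num)]
    norm_num
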